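/- arXiv:2211.13581 — 2 statements merged into one kernel-verified Lean document; each statement's English description precedes it below -/
import Mathlib

section
/- Let a_0,…,a_n be distinct real numbers and Ω(x) = ∏_{j=0}^{n}(x−a_j). For any index i and any k ≥ 1, (1/k!) Ω^{(k)}(a_i) = Ω'(a_i) · Z_{k−1}(−S_{1,i}(a_i), …, −S_{k−1,i}(a_i)), where S_{r,i}(x) = Σ_{j≠i} 1/(a_j − x)^r and Z_{k−1} is the cycle index of S_{k−1}. -/
open Finset

/-- `cycleCount i σ` is the number of cycles of length `i` in the cycle
decomposition of the permutation `σ` (fixed points count as 1-cycles). -/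
def cycleCount {n : ℕ} (i : ℕ) (σ : Equiv.Perm (Fin n)) : ℕ :=
  if i = 1 then (Finset.univ.filter fun a => σ a = a).card
  else Multiset.count i σ.cycleType

/-- The cycle index of the symmetric group `S_n`:
`Z_n(x_1,…,x_n) = (1/n!) ∑_{σ ∈ S_n} ∏_{i=1}^n x_i ^ c_i(σ)`. -/
noncomputable def cycleIndex (n : ℕ) (x : ℕ → ℝ) : ℝ :=
  (n.factorial : ℝ)⁻¹ *
    ∑ σ : Equiv.Perm (Fin n), ∏ i ∈ Finset.Icc 1 n, x i ^ cycleCount i σ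

/-!
Taylor expansion at the node `aᵢ` gives `Ω^{(k)}(aᵢ) / k! = e_{n+1-k}(aᵢ - aⱼ : j ≠ i)`; dividing
by `Ω'(aᵢ) = ∏_{j ≠ i} (aᵢ - aⱼ)` turns this into `e_{k-1}(d)` for `dⱼ = (aᵢ - aⱼ)⁻¹`, while
`-S_{r,i}(aᵢ) = (-1)^(r+1) p_r(d)` for the power sums `p_r`. It remains to show
`e_m = Z_m(p₁, -p₂, p₃, …)`. Expanding one power sum per cycle, the monomial of `σ` becomes
`sign σ` times the sum of `∏ₓ d (f x)` over the colourings `f : Fin m → ι` that are constant on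
the cycles of `σ`. Exchanging the two sums, the signs of the permutations fixing a colouring
cancel unless the colouring is injective, and the injective colourings contribute `m! · e_m`.
-/

namespace Equiv.Perm

variable {α : Type*}

theorem SameCycle.apply_eq_of_comp_eq [Finite α] {β : Type*} {σ : Perm α} {f : α → β}
    (hf : f ∘ σ = f) {x y : α} (h : σ.SameCycle x y) : f x = f y := by
  obtain ⟨n, -, rfl⟩ := h.exists_pow_eq'
  clear h
  induction n with
  | zero => rfl
  | succ n ih => rw [pow_succ', mul_apply]; exact ih.trans (congr_fun hf _).symm

theorem out_mk_of_apply_eq {σ : Perm α} {x : α} (hx : σ x = x) :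
    (Quotient.mk (SameCycle.setoid σ) x).out = x :=
  (Quotient.mk_out (s := SameCycle.setoid σ) x).eq_of_right hx

variable [Fintype α] [DecidableEq α]

theorem prod_map_parts_partition_neg_one_pow {R : Type*} [CommRing R] (σ : Perm α) :
    (σ.partition.parts.map fun i => (-1 : R) ^ (i + 1)).prod = (sign σ : ℤ) := by
  rw [parts_partition, Multiset.map_add, Multiset.prod_add, Multiset.map_replicate,
    Multiset.prod_replicate, neg_one_pow_two, one_pow, mul_one, sign_of_cycleType']
  induction σ.cycleType using Multiset.induction_on with
  | empty => simp
  | cons n s ih => rw [Multiset.map_cons, Multiset.prod_cons, ih]; simp [pow_succ]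

instance (σ : Perm α) : DecidableRel (SameCycle.setoid σ).r :=
  inferInstanceAs (DecidableRel σ.SameCycle)

theorem filter_sameCycle_of_apply_ne {σ : Perm α} {x : α} (hx : σ x ≠ x) :
    ({y | σ.SameCycle x y} : Finset α) = (σ.cycleOf x).support := by
  ext y
  rw [mem_filter, mem_support_cycleOf_iff, mem_support]
  simp [hx]

theorem filter_sameCycle_of_apply_eq {σ : Perm α} {x : α} (hx : σ x = x) :
    ({y | σ.SameCycle x y} : Finset α) = {x} := by
  ext y
  simp only [mem_filter, mem_univ, true_and, mem_singleton]
  exact ⟨fun h => (h.eq_of_left hx).symm, fun h => h ▸ SameCycle.rfl⟩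

theorem filter_mk_eq (σ : Perm α) (q : Quotient (SameCycle.setoid σ)) :
    ({x | Quotient.mk _ x = q} : Finset α) = ({y | σ.SameCycle q.out y} : Finset α) := by
  ext y
  simp only [mem_filter, mem_univ, true_and, Quotient.mk_eq_iff_out]
  exact sameCycle_comm

theorem map_card_filter_mk_of_apply_eq (σ : Perm α) :
    ({q | σ q.out = q.out} : Finset (Quotient (SameCycle.setoid σ))).val.map
      (fun q => #{x | Quotient.mk _ x = q}) =
      Multiset.replicate (Fintype.card α - #σ.support) 1 := by
  refine Multiset.eq_replicate.2 ⟨?_, fun n hn => ?_⟩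
  · rw [Multiset.card_map, card_val, ← card_compl]
    refine card_nbij' Quotient.out (Quotient.mk _) (fun q hq => ?_) (fun x hx => ?_)
      (fun q _ => Quotient.out_eq q) (fun x hx => out_mk_of_apply_eq (by simpa using hx))
    · simpa using hq
    · have hx : σ x = x := by simpa using hx
      simpa [out_mk_of_apply_eq hx] using hx
  · obtain ⟨q, hq, rfl⟩ := Multiset.mem_map.1 hn
    rw [filter_mk_eq, filter_sameCycle_of_apply_eq (by simpa using hq), card_singleton]

theorem image_cycleOf_out_filter_apply_ne (σ : Perm α) :
    ({q | σ q.out ≠ q.out} : Finset (Quotient (SameCycle.setoid σ))).image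
      (fun q => σ.cycleOf q.out) = σ.cycleFactorsFinset := by
  ext c
  simp only [mem_image, mem_filter, mem_univ, true_and]
  constructor
  · rintro ⟨q, hq, rfl⟩
    exact cycleOf_mem_cycleFactorsFinset_iff.2 (mem_support.2 hq)
  · intro hc
    obtain ⟨x, hx⟩ := (mem_cycleFactorsFinset_iff.1 hc).1.nonempty_support
    have hxσ : σ x ≠ x := mem_support.1 (mem_cycleFactorsFinset_support_le hc hx)
    have hout : σ.SameCycle (Quotient.mk (SameCycle.setoid σ) x).out x :=
      Quotient.mk_out (s := SameCycle.setoid σ) x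
    refine ⟨Quotient.mk _ x, fun h => hxσ (hout.apply_eq_self_iff.1 h), ?_⟩
    rw [hout.cycleOf_eq, cycle_is_cycleOf hx hc]

theorem injOn_cycleOf_out_filter_apply_ne (σ : Perm α) :
    Set.InjOn (fun q : Quotient (SameCycle.setoid σ) => σ.cycleOf q.out)
      ({q | σ q.out ≠ q.out} : Finset (Quotient (SameCycle.setoid σ))) := by
  intro q₁ hq₁ q₂ _ (h : σ.cycleOf q₁.out = σ.cycleOf q₂.out)
  have hmem : q₁.out ∈ (σ.cycleOf q₁.out).support :=
    mem_support_cycleOf_iff.2 ⟨SameCycle.rfl, mem_support.2 (by simpa using hq₁)⟩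
  rw [h, mem_support_cycleOf_iff] at hmem
  exact Quotient.out_equiv_out.1 hmem.1.symm

theorem map_card_filter_mk_of_apply_ne (σ : Perm α) :
    ({q | σ q.out ≠ q.out} : Finset (Quotient (SameCycle.setoid σ))).val.map
      (fun q => #{x | Quotient.mk _ x = q}) = σ.cycleType := by
  rw [cycleType_def, ← image_cycleOf_out_filter_apply_ne,
    image_val_of_injOn (injOn_cycleOf_out_filter_apply_ne σ), Multiset.map_map]
  refine Multiset.map_congr rfl fun q hq => ?_
  rw [filter_mk_eq, filter_sameCycle_of_apply_ne (by simpa using hq)]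
  rfl

theorem map_card_filter_mk_eq_parts_partition (σ : Perm α) :
    (univ : Finset (Quotient (SameCycle.setoid σ))).val.map
      (fun q => #{x | Quotient.mk _ x = q}) = σ.partition.parts := by
  rw [← Multiset.filter_add_not (fun q => σ q.out = q.out) univ.val, Multiset.map_add,
    ← filter_val, ← filter_val, map_card_filter_mk_of_apply_eq, map_card_filter_mk_of_apply_ne,
    add_comm, parts_partition]

theorem sum_comp_eq_self_prod_eq_prod_parts {ι R : Type*} [Fintype ι] [DecidableEq ι]
    [CommSemiring R] (σ : Perm α) (d : ι → R) :
    ∑ f : α → ι with f ∘ σ = f, ∏ x, d (f x) =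
      (σ.partition.parts.map fun i => ∑ j, d j ^ i).prod := by
  have himage : (univ : Finset (Quotient (SameCycle.setoid σ) → ι)).image (· ∘ Quotient.mk _) =
      ({f | f ∘ σ = f} : Finset (α → ι)) := by
    ext f
    simp only [mem_image, mem_univ, true_and, mem_filter]
    constructor
    · rintro ⟨g, rfl⟩
      funext x
      exact congrArg g (Quotient.sound (sameCycle_apply_left.2 SameCycle.rfl))
    · intro hf
      exact ⟨Quotient.lift f fun x y h => h.apply_eq_of_comp_eq hf, rfl⟩
  rw [← himage, sum_image fun g₁ _ g₂ _ h => Quotient.mk_surjective.injective_comp_right h,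
    ← map_card_filter_mk_eq_parts_partition, Multiset.map_map, ← prod_eq_multiset_prod]
  simp only [Function.comp_apply]
  rw [Fintype.prod_sum]
  refine sum_congr rfl fun g _ => ?_
  rw [← Fintype.prod_fiberwise' (Quotient.mk _) (fun q => d (g q))]
  simp [Fintype.card_subtype]

theorem sum_sign_filter_comp_eq {ι R : Type*} [DecidableEq ι] [CommRing R] (f : α → ι) :
    ∑ σ ∈ ({σ | f ∘ σ = f} : Finset (Perm α)), ((sign σ : ℤ) : R) =
      if Function.Injective f then 1 else 0 := by
  split_ifs with hf
  · have hone : ({σ | f ∘ σ = f} : Finset (Perm α)) = {1} := by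
      ext σ
      simp only [mem_filter, mem_univ, true_and, mem_singleton]
      exact ⟨fun h => ext fun x => hf (congr_fun h x), fun h => h ▸ rfl⟩
    simp [hone]
  · obtain ⟨x, y, hfxy, hxy⟩ := Function.not_injective_iff.1 hf
    have hswap : f ∘ swap x y = f := by
      funext z
      rcases eq_or_ne z x with rfl | hzx
      · simp [hfxy]
      rcases eq_or_ne z y with rfl | hzy
      · simp [hfxy]
      · simp [swap_apply_of_ne_of_ne hzx hzy]
    refine sum_involution (fun σ _ => swap x y * σ) (fun σ _ => ?_) (fun σ _ _ h => hxy.symm ?_)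
      (fun σ hσ => ?_) (fun σ _ => swap_mul_self_mul x y σ)
    · simp [sign_mul, sign_swap hxy]
    · simpa using congr_arg (· x) (mul_right_cancel (h.trans (one_mul σ).symm))
    · simp only [mem_filter, mem_univ, true_and] at hσ ⊢
      rw [coe_mul, ← Function.comp_assoc, hswap, hσ]

end Equiv.Perm

section InjectiveColourings

variable {α ι : Type*} [Fintype α] [DecidableEq α] [Fintype ι] [DecidableEq ι]

theorem card_filter_injective_image_eq {t : Finset ι} (ht : #t = Fintype.card α) :
    #{f : α → ι | Function.Injective f ∧ univ.image f = t} = (Fintype.card α).factorial := by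
  have hmem (f : α → ι) (hf : univ.image f = t) (x : α) : f x ∈ t :=
    hf ▸ mem_image_of_mem f (mem_univ x)
  let e : {f : α → ι // Function.Injective f ∧ univ.image f = t} ≃ (α ≃ t) :=
    { toFun f := Equiv.ofBijective (fun x => ⟨f.1 x, hmem f.1 f.2.2 x⟩)
        ⟨fun x y h => f.2.1 (congr_arg Subtype.val h), fun y => by
          obtain ⟨x, -, hx⟩ := mem_image.1 (f.2.2.symm ▸ y.2 : y.1 ∈ univ.image f.1)
          exact ⟨x, Subtype.ext hx⟩⟩
      invFun e := ⟨fun x => e x, Subtype.val_injective.comp e.injective, by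
        ext y
        simp only [mem_image, mem_univ, true_and]
        exact ⟨fun ⟨x, hx⟩ => hx ▸ (e x).2, fun hy => ⟨e.symm ⟨y, hy⟩, by simp⟩⟩⟩
      left_inv _ := rfl
      right_inv _ := by ext; rfl }
  rw [← Fintype.card_subtype, Fintype.card_congr e,
    Fintype.card_equiv (Fintype.equivOfCardEq (by rw [Fintype.card_coe, ht]))]

theorem sum_filter_injective_prod_eq {R : Type*} [CommSemiring R] (d : ι → R) :
    ∑ f : α → ι with Function.Injective f, ∏ x, d (f x) =
      (Fintype.card α).factorial * ∑ t ∈ powersetCard (Fintype.card α) univ, ∏ j ∈ t, d j := by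
  have hmaps : ∀ f ∈ ({f | Function.Injective f} : Finset (α → ι)),
      univ.image f ∈ powersetCard (Fintype.card α) univ := fun f hf => by
    rw [mem_powersetCard_univ, card_image_of_injective _ (mem_filter.1 hf).2, card_univ]
  rw [← sum_fiberwise_of_maps_to hmaps, mul_sum]
  refine sum_congr rfl fun t ht => ?_
  have hprod : ∀ f ∈ ({f | Function.Injective f} : Finset (α → ι)).filter (univ.image · = t),
      ∏ x, d (f x) = ∏ j ∈ t, d j := fun f hf => by
    simp only [mem_filter, mem_univ, true_and] at hf
    rw [← hf.2, prod_image fun x _ y _ h => hf.1 h]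
  rw [sum_congr rfl hprod, sum_const, filter_filter,
    card_filter_injective_image_eq (mem_powersetCard_univ.1 ht), nsmul_eq_mul]

end InjectiveColourings

theorem count_parts_partition_eq_cycleCount {m i : ℕ} (σ : Equiv.Perm (Fin m)) (hi : 1 ≤ i) :
    σ.partition.parts.count i = cycleCount i σ := by
  rw [Equiv.Perm.parts_partition, Multiset.count_add, Multiset.count_replicate, cycleCount]
  rcases hi.eq_or_lt with rfl | hi
  · have hfix : ({a | σ a = a} : Finset (Fin m)) = σ.supportᶜ := by ext; simp
    rw [Multiset.count_eq_zero.2 fun h => (Equiv.Perm.one_lt_of_mem_cycleType h).false, hfix,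
      card_compl]
    simp
  · simp [hi.ne', hi.ne]

theorem prod_Icc_pow_cycleCount {M : Type*} [CommMonoid M] {m : ℕ} (σ : Equiv.Perm (Fin m))
    (x : ℕ → M) : ∏ i ∈ Icc 1 m, x i ^ cycleCount i σ = (σ.partition.parts.map x).prod := by
  have hsub : σ.partition.parts.toFinset ⊆ Icc 1 m := fun i hi => by
    rw [Multiset.mem_toFinset] at hi
    simpa using ⟨σ.partition.parts_pos hi, (σ.partition.le_of_mem_parts hi).trans_eq (by simp)⟩
  rw [Finset.prod_multiset_map_count, prod_subset hsub fun i _ hi => by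
    rw [Multiset.count_eq_zero_of_notMem (by simpa using hi), pow_zero]]
  exact prod_congr rfl fun i hi => by
    rw [count_parts_partition_eq_cycleCount σ (mem_Icc.1 hi).1]

open Equiv Equiv.Perm in
theorem cycleIndex_neg_one_pow_mul_powerSum {ι : Type*} [Fintype ι] [DecidableEq ι] (m : ℕ)
    (d : ι → ℝ) :
    cycleIndex m (fun r => (-1) ^ (r + 1) * ∑ j, d j ^ r) =
      ∑ t ∈ powersetCard m univ, ∏ j ∈ t, d j := by
  rw [cycleIndex, inv_mul_eq_iff_eq_mul₀ (by positivity)]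
  calc ∑ σ : Perm (Fin m), ∏ i ∈ Icc 1 m, ((-1) ^ (i + 1) * ∑ j, d j ^ i) ^ cycleCount i σ
      = ∑ σ : Perm (Fin m), ∑ f : Fin m → ι with f ∘ σ = f,
          ((sign σ : ℤ) : ℝ) * ∏ x, d (f x) := by
        refine sum_congr rfl fun σ _ => ?_
        rw [prod_Icc_pow_cycleCount, Multiset.prod_map_mul, prod_map_parts_partition_neg_one_pow,
          ← sum_comp_eq_self_prod_eq_prod_parts, mul_sum]
    _ = ∑ f : Fin m → ι, (∑ σ ∈ ({σ | f ∘ σ = f} : Finset (Perm (Fin m))), ((sign σ : ℤ) : ℝ)) *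
          ∏ x, d (f x) := by
        simp_rw [sum_mul]
        exact sum_comm' fun σ f => by simp
    _ = ∑ f : Fin m → ι with Function.Injective f, ∏ x, d (f x) := by
        simp_rw [sum_sign_filter_comp_eq, ite_mul, one_mul, zero_mul, sum_ite, sum_const_zero,
          add_zero]
    _ = m.factorial * ∑ t ∈ powersetCard m univ, ∏ j ∈ t, d j := by
        rw [sum_filter_injective_prod_eq, Fintype.card_fin]

namespace Polynomial

variable {ι : Type*} [Fintype ι] [DecidableEq ι]

theorem iteratedDeriv_eval {𝕜 : Type*} [NontriviallyNormedField 𝕜] (p : 𝕜[X]) (k : ℕ) :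
    iteratedDeriv k (fun t => p.eval t) = fun t => (derivative^[k] p).eval t := by
  induction k with
  | zero => simp
  | succ k ih =>
    funext t
    rw [iteratedDeriv_succ, ih, Function.iterate_succ_apply', Polynomial.deriv]

theorem factorial_inv_mul_iteratedDeriv_eval {𝕜 : Type*} [NontriviallyNormedField 𝕜]
    [CharZero 𝕜] (p : 𝕜[X]) (k : ℕ) (r : 𝕜) :
    (k.factorial : 𝕜)⁻¹ * iteratedDeriv k (fun t => p.eval t) r = (taylor r p).coeff k := by
  simp only [iteratedDeriv_eval, taylor_coeff, ← factorial_smul_hasseDeriv]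
  rw [LinearMap.smul_apply, eval_smul, nsmul_eq_mul,
    inv_mul_cancel_left₀ (Nat.cast_ne_zero.2 k.factorial_ne_zero)]

theorem taylor_prod_X_sub_C {R : Type*} [CommRing R] (a : ι → R) (i : ι) :
    taylor (a i) (∏ j, (X - C (a j))) = X * ∏ j : {j // j ≠ i}, (X + C (a i - a j)) := by
  rw [taylor_apply, prod_comp, Fintype.prod_eq_mul_prod_subtype_ne _ i]
  simp only [sub_comp, X_comp, C_comp, map_sub, add_sub_cancel_right, add_sub_assoc]

theorem coeff_prod_X_add_C_eq_prod_mul_sum_powersetCard_inv {K : Type*} [Field K] (b : ι → K)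
    (hb : ∀ j, b j ≠ 0) (m : ℕ) :
    (∏ j, (X + C (b j))).coeff m = (∏ j, b j) * ∑ t ∈ powersetCard m univ, ∏ j ∈ t, (b j)⁻¹ := by
  rcases le_or_gt m (Fintype.card ι) with hm | hm
  · rw [prod_X_add_C_coeff _ _ (by simpa using hm), mul_sum]
    refine sum_nbij' compl compl (fun t ht => ?_) (fun t ht => ?_) (fun t _ => compl_compl t)
      (fun t _ => compl_compl t) (fun t _ => ?_)
    · rw [mem_powersetCard_univ] at ht ⊢
      rw [card_compl, ht, card_univ]
      omega
    · rw [mem_powersetCard_univ] at ht ⊢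
      rw [card_compl, ht, card_univ]
    · rw [prod_inv_distrib, ← prod_mul_prod_compl t,
        mul_inv_cancel_right₀ (prod_ne_zero_iff.2 fun j _ => hb j)]
  · rw [coeff_eq_zero_of_natDegree_lt, powersetCard_eq_empty.2 (by simpa using hm), sum_empty,
      mul_zero]
    rw [natDegree_prod _ _ fun j _ => X_add_C_ne_zero (b j)]
    simpa using hm

end Polynomial

open Polynomial in
/-- For distinct nodes `a_0,…,a_n`, `Ω(x) = ∏ (x - a_j)` and `k ≥ 1`:
`(1/k!) Ω^{(k)}(a_i) = Ω'(a_i) · Z_{k-1}(-S_{1,i}(a_i),…,-S_{k-1,i}(a_i))` with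
`S_{r,i}(x) = ∑_{j ≠ i} (a_j - x)^{-r}`. -/
theorem iteratedDeriv_prod_at_node_cycleIndex (n : ℕ) (a : Fin (n + 1) → ℝ)
    (ha : Function.Injective a) (i : Fin (n + 1)) (k : ℕ) (hk : 1 ≤ k) :
    (k.factorial : ℝ)⁻¹ * iteratedDeriv k (fun t => ∏ j, (t - a j)) (a i) =
      deriv (fun t => ∏ j, (t - a j)) (a i) *
        cycleIndex (k - 1)
          (fun r => -∑ j ∈ Finset.univ.erase i, ((a j - a i) ^ r)⁻¹) := by
  obtain ⟨m, rfl⟩ := Nat.exists_eq_add_of_le' hk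
  set b : {j // j ≠ i} → ℝ := fun j => a i - a j
  have hΩ : (fun t => ∏ j, (t - a j)) = fun t => (∏ j, (X - C (a j))).eval t := by
    simp [eval_prod]
  have htaylor (N : ℕ) : ((N + 1).factorial : ℝ)⁻¹ *
      iteratedDeriv (N + 1) (fun t => ∏ j, (t - a j)) (a i) = (∏ j, (X + C (b j))).coeff N := by
    rw [hΩ, factorial_inv_mul_iteratedDeriv_eval, taylor_prod_X_sub_C, coeff_X_mul]
  have hderiv : deriv (fun t => ∏ j, (t - a j)) (a i) = ∏ j, b j := by
    simpa [coeff_zero_eq_eval_zero, eval_prod] using htaylor 0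
  have hpowerSum (r : ℕ) : -∑ j ∈ univ.erase i, ((a j - a i) ^ r)⁻¹ =
      (-1) ^ (r + 1) * ∑ j, (b j)⁻¹ ^ r := by
    rw [sum_subtype (univ.erase i) (p := (· ≠ i)) (by simp), mul_sum, ← sum_neg_distrib]
    refine sum_congr rfl fun j _ => ?_
    rw [← neg_sub (a i), neg_pow, mul_inv, ← inv_pow, pow_succ]
    simp [b]
  rw [Nat.add_sub_cancel, htaylor, hderiv, funext hpowerSum, cycleIndex_neg_one_pow_mul_powerSum,
    coeff_prod_X_add_C_eq_prod_mul_sum_powersetCard_inv b fun j => sub_ne_zero.2 (ha.ne j.2.symm)]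
end

section
/- Let g be a function of the form g = log|Ω| where Ω is a nonvanishing smooth function on an open set, and suppose Ω is k-times differentiable at x with Ω(x) ≠ 0. Then Ω^{(k)}(x) = k! · Ω(x) · Z_k(g'(x)/0!, g''(x)/1!, …, g^{(k)}(x)/(k−1)!), i.e., the k-th derivative of exp∘g equals k! exp(g(x)) Z_k(g^{(r)}(x)/(r−1)!), where Z_k is the cycle index of S_k. -/
/-!
Put `y_ℓ = g^{(ℓ)} / (ℓ - 1)!` and `W_m = ∑_{σ ∈ S_m} ∏_{cycles c of σ} y_{|c|} = m! Z_m(y)`.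
Since `Ω' = Ω g' = Ω y_1` and `y_ℓ' = ℓ y_{ℓ+1}`, differentiating `Ω W_m` gives
`Ω (y_1 W_m + D W_m)`, where `D` replaces one factor `y_ℓ` by `ℓ y_{ℓ+1}`. This is `Ω W_{m+1}`:
a permutation of `{0, …, m}` arises from one of `{1, …, m}` either by adding `0` as a fixed point
(a new factor `y_1`) or by inserting `0` into a cycle next to one of its `ℓ` points (turning `y_ℓ`
into `y_{ℓ+1}`). By induction, `Ω^{(k)} = Ω W_k = k! Ω Z_k(y)`.
-/

open Finset

open Equiv Equiv.Perm

namespace Equiv.Perm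

variable {α : Type*} [Fintype α] [DecidableEq α]

theorem support_swap_mul_of_apply_eq_self {f : Perm α} {a b : α} (ha : f a = a) (hab : a ≠ b) :
    (swap a b * f).support = insert a (insert b f.support) := by
  ext x
  simp only [mem_support, mem_insert, mul_apply]
  rcases eq_or_ne x a with rfl | hxa
  · simp [ha, hab.symm]
  have hfxa : f x ≠ a := fun h => hxa (f.injective (h.trans ha.symm))
  rcases eq_or_ne (f x) b with hfxb | hfxb
  · simpa [hfxb, hxa, Ne.symm hxa] using (em (x = b)).imp_right Ne.symm
  · rcases eq_or_ne x b with rfl | hxb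
    · simp [swap_apply_of_ne_of_ne hfxa hfxb, hfxb]
    · simp [swap_apply_of_ne_of_ne hfxa hfxb, hxa, hxb]

theorem IsCycle.swap_mul_of_notMem_of_mem {c : Perm α} (hc : c.IsCycle) {a b : α}
    (ha : a ∉ c.support) (hb : b ∈ c.support) : (swap a b * c).IsCycle := by
  have hca : c a = a := notMem_support.mp ha
  have hab : a ≠ b := fun h => ha (h ▸ hb)
  have hda : (swap a b * c) a = b := by simp [hca]
  -- along the orbit of `b`, `swap a b * c` agrees with `c` except that it passes through `a`
  -- before returning to `b`
  have hsame : ∀ k : ℕ, (swap a b * c).SameCycle a ((c ^ k) b) := by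
    intro k
    induction k with
    | zero => exact ⟨1, by simpa using hda⟩
    | succ k ih =>
      have hza : (c ^ k) b ≠ a := fun h => ha (h ▸ pow_apply_mem_support.mpr hb)
      have hcza : c ((c ^ k) b) ≠ a := fun h => hza (c.injective (h.trans hca.symm))
      rw [pow_succ', mul_apply]
      rcases eq_or_ne (c ((c ^ k) b)) b with h | h
      · rw [h]; exact ⟨1, by simpa using hda⟩
      · refine ih.trans ⟨1, ?_⟩
        rw [zpow_one, mul_apply, swap_apply_of_ne_of_ne hcza h]
  refine ⟨a, by rw [hda]; exact hab.symm, fun y hy => ?_⟩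
  rw [← mem_support, support_swap_mul_of_apply_eq_self hca hab, insert_eq_of_mem hb,
    mem_insert] at hy
  rcases hy with rfl | hy
  · exact SameCycle.refl _ _
  · obtain ⟨k, rfl⟩ := hc.exists_pow_eq (mem_support.mp hb) (mem_support.mp hy)
    exact hsame k

theorem cycleType_swap_mul_of_apply_eq_self {f : Perm α} {a b : α} (ha : f a = a)
    (hb : f b = b) (hab : a ≠ b) : (swap a b * f).cycleType = 2 ::ₘ f.cycleType := by
  have hd : (swap a b).Disjoint f := by
    intro x
    rcases eq_or_ne x a with rfl | hxa
    · exact .inr ha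
    rcases eq_or_ne x b with rfl | hxb
    · exact .inr hb
    · exact .inl (swap_apply_of_ne_of_ne hxa hxb)
  rw [hd.cycleType_mul, (isCycle_swap hab).cycleType, card_support_swap hab,
    Multiset.singleton_add]

theorem cycleType_swap_mul_of_apply_ne_self {f : Perm α} {a b : α} (ha : f a = a)
    (hb : f b ≠ b) :
    (swap a b * f).cycleType =
      (#(f.cycleOf b).support + 1) ::ₘ f.cycleType.erase #(f.cycleOf b).support := by
  set c := f.cycleOf b
  have hcf : c ∈ f.cycleFactorsFinset :=
    cycleOf_mem_cycleFactorsFinset_iff.mpr (mem_support.mpr hb)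
  have hc : c.IsCycle := isCycle_cycleOf f hb
  have hca : c a = a :=
    notMem_support.mp fun h => mem_support.mp (support_cycleOf_le f b h) ha
  have hbc : b ∈ c.support :=
    mem_support_cycleOf_iff.mpr ⟨SameCycle.refl _ _, mem_support.mpr hb⟩
  have hab : a ≠ b := fun h => hb (h ▸ ha)
  -- `f` is the cycle `c` through `b` times the disjoint rest `f * c⁻¹`; only `c` changes
  have hrc : (f * c⁻¹).Disjoint c := disjoint_mul_inv_of_mem_cycleFactorsFinset hcf
  have hsupp : (swap a b * c).support = insert a c.support := by
    rw [support_swap_mul_of_apply_eq_self hca hab, insert_eq_of_mem hbc]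
  have hd : (swap a b * c).Disjoint (f * c⁻¹) := by
    rw [disjoint_iff_disjoint_support, hsupp, Finset.disjoint_insert_left]
    refine ⟨?_, hrc.symm.disjoint_support⟩
    rw [notMem_support, mul_apply, inv_eq_iff_eq.mpr hca.symm, ha]
  have hmul : swap a b * f = swap a b * c * (f * c⁻¹) := by
    rw [mul_assoc, ← hrc.commute.eq, inv_mul_cancel_right]
  rw [hmul, hd.cycleType_mul, (hc.swap_mul_of_notMem_of_mem (notMem_support.mpr hca) hbc).cycleType,
    hsupp, card_insert_of_notMem (notMem_support.mpr hca),
    cycleType_mul_inv_mem_cycleFactorsFinset_eq_sub hcf, hc.cycleType, Multiset.singleton_add,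
    Multiset.sub_singleton]

def cycleLength (f : Perm α) (b : α) : ℕ :=
  if f b = b then 1 else #(f.cycleOf b).support

theorem parts_partition_swap_mul {f : Perm α} {a b : α} (ha : f a = a) (hab : a ≠ b) :
    (swap a b * f).partition.parts =
      (f.cycleLength b + 1) ::ₘ (f.partition.parts.erase 1).erase (f.cycleLength b) := by
  have hsupp := support_swap_mul_of_apply_eq_self ha hab
  have has : a ∉ f.support := notMem_support.mpr ha
  have hcard := card_le_univ (swap a b * f).support
  simp only [parts_partition, cycleLength]
  by_cases hb : f b = b
  · have hbs : b ∉ f.support := notMem_support.mpr hb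
    rw [hsupp, card_insert_of_notMem (by simp [hab, has]), card_insert_of_notMem hbs] at hcard ⊢
    obtain ⟨j, hj⟩ := Nat.exists_eq_add_of_le' (show 2 ≤ Fintype.card α - #f.support by omega)
    rw [if_pos hb, cycleType_swap_mul_of_apply_eq_self ha hb hab, hj,
      show Fintype.card α - (#f.support + 1 + 1) = j by omega]
    simp [Multiset.add_cons, Multiset.cons_add]
  · rw [hsupp, insert_eq_of_mem (mem_support.mpr hb), card_insert_of_notMem has] at hcard ⊢
    obtain ⟨j, hj⟩ := Nat.exists_eq_add_of_le' (show 1 ≤ Fintype.card α - #f.support by omega)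
    have hmem : #(f.cycleOf b).support ∈ f.cycleType :=
      Multiset.mem_map.mpr ⟨_, cycleOf_mem_cycleFactorsFinset_iff.mpr (mem_support.mpr hb), rfl⟩
    rw [if_neg hb, cycleType_swap_mul_of_apply_ne_self ha hb, hj,
      show Fintype.card α - (#f.support + 1) = j by omega, Multiset.replicate_succ,
      Multiset.add_cons, Multiset.erase_cons_head, Multiset.erase_add_left_pos _ hmem,
      Multiset.cons_add]

theorem sum_cycleLength {M : Type*} [AddCommMonoid M] (f : Perm α) (F : ℕ → M) :
    ∑ b, F (f.cycleLength b) = (f.partition.parts.map fun ℓ => ℓ • F ℓ).sum := by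
  rw [← sum_add_sum_compl f.support, parts_partition, Multiset.map_add, Multiset.sum_add]
  congr 1
  · have hfiber :
        ∀ c ∈ f.cycleFactorsFinset, {b ∈ f.support | f.cycleOf b = c} = c.support := by
      intro c hc
      ext b
      rw [mem_filter]
      refine ⟨?_, fun hb =>
        ⟨mem_cycleFactorsFinset_support_le hc hb, (cycle_is_cycleOf hb hc).symm⟩⟩
      rintro ⟨hb, rfl⟩
      exact mem_support_cycleOf_iff.mpr ⟨SameCycle.refl _ _, hb⟩
    calc ∑ b ∈ f.support, F (f.cycleLength b)
        = ∑ c ∈ f.cycleFactorsFinset, ∑ b ∈ f.support with f.cycleOf b = c,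
            F (f.cycleLength b) :=
          (sum_fiberwise_of_maps_to (fun b hb => cycleOf_mem_cycleFactorsFinset_iff.mpr hb) _).symm
      _ = ∑ c ∈ f.cycleFactorsFinset, #c.support • F #c.support := by
          refine sum_congr rfl fun c hc => ?_
          rw [hfiber c hc, ← sum_const]
          refine sum_congr rfl fun b hb => ?_
          rw [cycleLength, if_neg (mem_support.mp (mem_cycleFactorsFinset_support_le hc hb)),
            ← cycle_is_cycleOf hb hc]
      _ = _ := by rw [cycleType_def, Multiset.map_map]; rfl
  · rw [sum_congr rfl fun b hb => by
        rw [cycleLength, if_pos (notMem_support.mp (mem_compl.mp hb))],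
      sum_const, card_compl, Multiset.map_replicate, Multiset.sum_replicate, one_smul]

end Equiv.Perm

theorem decomposeFin_symm_eq_swap_mul {m : ℕ} (p : Fin (m + 1)) (e : Perm (Fin m)) :
    decomposeFin.symm (p, e) = swap 0 p * e.extendDomain (finSuccAboveEquiv 0) := by
  ext x
  refine Fin.cases ?_ (fun q => ?_) x
  · simp [extendDomain_apply_not_subtype]
  · have : (q.succ : Fin (m + 1)) = finSuccAboveEquiv 0 q := by simp [finSuccAboveEquiv_apply]
    rw [decomposeFin_symm_apply_succ, mul_apply, this, extendDomain_apply_image]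
    simp [finSuccAboveEquiv_apply]

theorem parts_partition_extendDomain_finSuccAboveEquiv {m : ℕ} (e : Perm (Fin m)) :
    (e.extendDomain (finSuccAboveEquiv 0)).partition.parts = 1 ::ₘ e.partition.parts := by
  rw [parts_partition, parts_partition, cycleType_extendDomain, card_support_extend_domain,
    Fintype.card_fin, Fintype.card_fin,
    Nat.succ_sub (card_le_univ _ |>.trans_eq (Fintype.card_fin m)),
    Multiset.replicate_succ, Multiset.add_cons]

theorem sum_perm_fin_succ_partition {M : Type*} [AddCancelCommMonoid M] (Φ : Multiset ℕ → M)
    (m : ℕ) :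
    ∑ σ : Perm (Fin (m + 1)), Φ σ.partition.parts =
      ∑ e : Perm (Fin m), (Φ (1 ::ₘ e.partition.parts) + (e.partition.parts.map fun ℓ =>
        ℓ • Φ ((ℓ + 1) ::ₘ e.partition.parts.erase ℓ)).sum) := by
  rw [← Equiv.sum_comp decomposeFin.symm, Fintype.sum_prod_type_right]
  refine sum_congr rfl fun e _ => ?_
  set f := e.extendDomain (finSuccAboveEquiv 0)
  set P := e.partition.parts
  have hf0 : f 0 = 0 := extendDomain_apply_not_subtype _ _ (by simp)
  have hfP : f.partition.parts = 1 ::ₘ P := parts_partition_extendDomain_finSuccAboveEquiv e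
  set Ψ : ℕ → M := fun ℓ => Φ ((ℓ + 1) ::ₘ P.erase ℓ)
  -- for `p ≠ 0`, `decomposeFin.symm (p, e)` inserts `0` into the cycle through `p`
  have hswap : ∀ p ∈ univ.erase (0 : Fin (m + 1)),
      Φ (decomposeFin.symm (p, e)).partition.parts = Ψ (f.cycleLength p) := by
    intro p hp
    rw [decomposeFin_symm_eq_swap_mul, parts_partition_swap_mul hf0 (ne_of_mem_erase hp).symm,
      hfP, Multiset.erase_cons_head]
  -- each `ℓ`-cycle of `e` offers `ℓ` choices of `p`; the fixed point `0` of `f` cancels out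
  have hcount := f.sum_cycleLength Ψ
  rw [hfP, Multiset.map_cons, Multiset.sum_cons, ← add_sum_erase _ _ (mem_univ 0),
    cycleLength, if_pos hf0, one_smul] at hcount
  rw [← add_sum_erase _ _ (mem_univ 0), sum_congr rfl hswap, add_left_cancel hcount,
    decomposeFin_symm_eq_swap_mul, swap_self, ← Perm.one_def, one_mul, hfP]

section CycleSum

variable {R : Type*}

noncomputable def cycleSum [CommSemiring R] (n : ℕ) (y : ℕ → R) : R :=
  ∑ σ : Perm (Fin n), (σ.partition.parts.map y).prod

theorem cycleSum_succ [CommRing R] (m : ℕ) (y : ℕ → R) :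
    cycleSum (m + 1) y = y 1 * cycleSum m y +
      ∑ e : Perm (Fin m), (e.partition.parts.map fun ℓ =>
        ((e.partition.parts.erase ℓ).map y).prod * (ℓ * y (ℓ + 1))).sum := by
  rw [cycleSum, sum_perm_fin_succ_partition (fun P => (P.map y).prod), cycleSum, mul_sum,
    ← sum_add_distrib]
  refine sum_congr rfl fun e _ => ?_
  simp only [Multiset.map_cons, Multiset.prod_cons, nsmul_eq_mul]
  exact congrArg _ (congrArg Multiset.sum (Multiset.map_congr rfl fun ℓ _ => by ring))

theorem cycleCount_eq_count_parts {n : ℕ} (i : ℕ) (σ : Perm (Fin n)) :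
    cycleCount i σ = σ.partition.parts.count i := by
  rw [parts_partition, Multiset.count_add, Multiset.count_replicate]
  by_cases hi : i = 1
  · subst hi
    have hfix : ({a | σ a = a} : Finset (Fin n)) = σ.supportᶜ := by ext; simp
    rw [cycleCount, if_pos rfl, if_pos rfl, hfix, card_compl,
      Multiset.count_eq_zero.mpr fun h => (one_lt_of_mem_cycleType h).ne rfl, zero_add]
  · rw [cycleCount, if_neg hi, if_neg (Ne.symm hi), add_zero]

theorem prod_pow_cycleCount [CommMonoid R] {n : ℕ} (y : ℕ → R) (σ : Perm (Fin n)) :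
    ∏ i ∈ Icc 1 n, y i ^ cycleCount i σ = (σ.partition.parts.map y).prod := by
  simp_rw [cycleCount_eq_count_parts, prod_multiset_map_count]
  refine (prod_subset (fun i hi => ?_) fun i _ hi => ?_).symm
  · rw [Multiset.mem_toFinset] at hi
    exact mem_Icc.mpr ⟨σ.partition.parts_pos hi, (Nat.Partition.le_of_mem_parts hi).trans_eq
      (Fintype.card_fin n)⟩
  · rw [Multiset.count_eq_zero.mpr (Multiset.mem_toFinset.not.mp hi), pow_zero]

theorem factorial_mul_cycleIndex (n : ℕ) (y : ℕ → ℝ) :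
    (n.factorial : ℝ) * cycleIndex n y = cycleSum n y := by
  rw [cycleIndex, ← mul_assoc, mul_inv_cancel₀ (by positivity), one_mul]
  exact sum_congr rfl fun σ _ => prod_pow_cycleCount y σ

end CycleSum

section Derivatives

variable {𝕜 : Type*} [NontriviallyNormedField 𝕜]

theorem HasDerivAt.multiset_prod {ι 𝔸 : Type*} [NormedCommRing 𝔸] [NormedAlgebra 𝕜 𝔸]
    [DecidableEq ι] {u : Multiset ι} {g : ι → 𝕜 → 𝔸} {g' : ι → 𝔸} {x : 𝕜}
    (h : ∀ i ∈ u, HasDerivAt (g i) (g' i) x) :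
    HasDerivAt (fun x => (u.map (g · x)).prod)
      (u.map fun i => ((u.erase i).map (g · x)).prod * g' i).sum x := by
  have := (HasFDerivAt.multiset_prod fun i hi => (h i hi).hasFDerivAt).hasDerivAt
  rw [← ContinuousLinearMap.apply_apply (1 : 𝕜), map_multiset_sum, Multiset.map_map] at this
  simpa [Function.comp_def] using this

theorem ContDiffOn.hasDerivAt_iteratedDeriv {F : Type*} [NormedAddCommGroup F]
    [NormedSpace 𝕜 F] {f : 𝕜 → F} {U : Set 𝕜} {k i : ℕ} (hf : ContDiffOn 𝕜 k f U)
    (hU : IsOpen U) (hi : i < k) {t : 𝕜} (ht : t ∈ U) :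
    HasDerivAt (iteratedDeriv i f) (iteratedDeriv (i + 1) f t) t := by
  have hdiff : DifferentiableAt 𝕜 (iteratedDerivWithin i f U) t :=
    (hf.differentiableOn_iteratedDerivWithin (by exact_mod_cast hi) hU.uniqueDiffOn t ht)
      |>.differentiableAt (hU.mem_nhds ht)
  have heq : iteratedDerivWithin i f U =ᶠ[nhds t] iteratedDeriv i f :=
    Filter.eventuallyEq_of_mem (hU.mem_nhds ht) (iteratedDerivWithin_of_isOpen hU)
  rw [iteratedDeriv_succ]
  exact (heq.differentiableAt_iff.mp hdiff).hasDerivAt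

theorem hasDerivAt_cycleSum {m : ℕ} {y : ℕ → 𝕜 → 𝕜} {t : 𝕜}
    (hy : ∀ ℓ ∈ Icc 1 m, HasDerivAt (y ℓ) (ℓ * y (ℓ + 1) t) t) :
    HasDerivAt (fun s => cycleSum m (y · s))
      (cycleSum (m + 1) (y · t) - y 1 t * cycleSum m (y · t)) t := by
  rw [cycleSum_succ, add_sub_cancel_left]
  refine HasDerivAt.fun_sum fun σ _ => HasDerivAt.multiset_prod fun ℓ hℓ => hy ℓ ?_
  exact mem_Icc.mpr ⟨σ.partition.parts_pos hℓ, (Nat.Partition.le_of_mem_parts hℓ).trans_eq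
    (Fintype.card_fin m)⟩

theorem iteratedDeriv_eq_mul_cycleSum [CharZero 𝕜] {U : Set 𝕜} (hU : IsOpen U) {f g : 𝕜 → 𝕜}
    {k : ℕ} (hg : ContDiffOn 𝕜 k g U) (hf : ∀ t ∈ U, HasDerivAt f (f t * deriv g t) t) {m : ℕ}
    (hm : m ≤ k) {t : 𝕜} (ht : t ∈ U) :
    iteratedDeriv m f t =
      f t * cycleSum m (fun ℓ => iteratedDeriv ℓ g t / ((ℓ - 1).factorial : 𝕜)) := by
  induction m generalizing t with
  | zero => simp [cycleSum, parts_partition]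
  | succ m ih =>
    set y : ℕ → 𝕜 → 𝕜 := fun ℓ s => iteratedDeriv ℓ g s / (ℓ - 1).factorial
    -- `g⁽ˡ⁺¹⁾ / (ℓ - 1)! = ℓ · g⁽ˡ⁺¹⁾ / ℓ!`
    have hy : ∀ ℓ ∈ Icc 1 m, HasDerivAt (y ℓ) (ℓ * y (ℓ + 1) t) t := by
      intro ℓ hℓ
      obtain ⟨j, rfl⟩ : ∃ j, ℓ = j + 1 := ⟨ℓ - 1, by grind⟩
      refine ((hg.hasDerivAt_iteratedDeriv hU (i := j + 1) (by grind) ht).div_const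
        (j.factorial : 𝕜)).congr_deriv ?_
      have hj : (j + 1 : 𝕜) ≠ 0 := Nat.cast_add_one_ne_zero j
      simp only [y, Nat.add_sub_cancel, Nat.factorial_succ, Nat.cast_mul, Nat.cast_add_one]
      field_simp
    have heq : iteratedDeriv m f =ᶠ[nhds t] fun s => f s * cycleSum m (y · s) :=
      Filter.eventuallyEq_of_mem (hU.mem_nhds ht) fun s hs => ih (by omega) hs
    have hy1 : y 1 t = deriv g t := by simp [y]
    rw [iteratedDeriv_succ, heq.deriv_eq, ((hf t ht).fun_mul (hasDerivAt_cycleSum hy)).deriv, hy1]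
    ring

end Derivatives

/-- Faà di Bruno's formula via the cycle index: if `Ω` is `k`-times continuously
differentiable and nonvanishing on an open set `U`, `x ∈ U`, and
`g = log |Ω|`, then `Ω^{(k)}(x) = k! Ω(x) Z_k(g'(x)/0!, g''(x)/1!, …, g^{(k)}(x)/(k-1)!)`. -/
theorem iteratedDeriv_eq_cycleIndex_log (U : Set ℝ) (hU : IsOpen U)
    (Ω : ℝ → ℝ) (hΩ : ∀ y ∈ U, Ω y ≠ 0) (k : ℕ) (hk : ContDiffOn ℝ k Ω U)
    (x : ℝ) (hx : x ∈ U) :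
    iteratedDeriv k Ω x =
      (k.factorial : ℝ) * Ω x *
        cycleIndex k
          (fun r => iteratedDeriv r (fun t => Real.log |Ω t|) x /
            ((r - 1).factorial : ℝ)) := by
  have hg : ContDiffOn ℝ k (fun t => Real.log |Ω t|) U :=
    (hk.log hΩ).congr fun t _ => Real.log_abs (Ω t)
  rcases eq_or_ne k 0 with rfl | hk0
  · simp [cycleIndex]
  have hΩ' : ∀ t ∈ U, HasDerivAt Ω (Ω t * deriv (fun t => Real.log |Ω t|) t) t := by
    intro t ht
    have hd : HasDerivAt Ω (deriv Ω t) t :=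
      ((hk.differentiableOn (by exact_mod_cast hk0)) t ht).differentiableAt
        (hU.mem_nhds ht) |>.hasDerivAt
    simp_rw [Real.log_abs]
    rw [(hd.log (hΩ t ht)).deriv, mul_div_cancel₀ _ (hΩ t ht)]
    exact hd
  rw [mul_assoc, mul_left_comm, factorial_mul_cycleIndex]
  exact iteratedDeriv_eq_mul_cycleSum hU hg hΩ' le_rfl hx
end
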